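/- Let x^{(n)} be the projected gradient iterates satisfying Condition (B), and let x̃ be any minimizer of ‖Kx - y‖² over B_R. Then ‖x^{(n+1)} - x̃‖ ≤ ‖x^{(n)} - x̃‖ for every n, i.e. the iterates are Fejér monotone with respect to the set of minimizers. -/

import Mathlib

/-!
Write `u = x n`, `v = x (n+1)` and `z = u + β K*(y - K u)`. Since `v` is the nearest point of the
convex set `B_R` to `z`, the variational inequality at `x̃` gives
`⟪u - v, v - x̃⟫ ≥ β ⟪y - K u, K (x̃ - v)⟫`. Expanding the residuals, twice the right-hand side is
`β (‖y - K v‖² - ‖y - K x̃‖² + ‖K (u - x̃)‖² - ‖K (v - u)‖²) ≥ -β ‖K (v - u)‖² ≥ -‖u - v‖²`,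
using minimality of `x̃` and Condition (B) with `r ≤ 1`. Hence
`‖u - x̃‖² = ‖u - v‖² + 2 ⟪u - v, v - x̃⟫ + ‖v - x̃‖² ≥ ‖v - x̃‖²`.
-/

open scoped ENNReal NNReal

/-- The `ℓ¹`-ball of radius `R` inside `ℓ²(I)`. -/
noncomputable def l1Ball (I : Type*) (R : ℝ) : Set (lp (fun _ : I => ℝ) 2) :=
  {x | (∑' i, (‖x i‖₊ : ℝ≥0∞)) ≤ ENNReal.ofReal R}

open scoped InnerProductSpace

lemma convex_l1Ball (I : Type*) (R : ℝ) : Convex ℝ (l1Ball I R) := by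
  intro p hp q hq a b ha hb hab
  have hab' : (‖a‖₊ + ‖b‖₊ : ℝ≥0) = 1 := by
    ext
    simpa [Real.norm_of_nonneg ha, Real.norm_of_nonneg hb] using hab
  calc (∑' i, (‖(a • p + b • q) i‖₊ : ℝ≥0∞))
      ≤ ∑' i, ((‖a‖₊ : ℝ≥0∞) * ‖p i‖₊ + (‖b‖₊ : ℝ≥0∞) * ‖q i‖₊) := by
        refine ENNReal.tsum_le_tsum fun i => ?_
        rw [show (a • p + b • q) i = a * p i + b * q i from rfl, ← ENNReal.coe_mul,
          ← ENNReal.coe_mul, ← ENNReal.coe_add, ENNReal.coe_le_coe, ← nnnorm_mul, ← nnnorm_mul]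
        exact nnnorm_add_le _ _
    _ = (‖a‖₊ : ℝ≥0∞) * ∑' i, (‖p i‖₊ : ℝ≥0∞) + (‖b‖₊ : ℝ≥0∞) * ∑' i, (‖q i‖₊ : ℝ≥0∞) := by
        rw [ENNReal.tsum_add, ENNReal.tsum_mul_left, ENNReal.tsum_mul_left]
    _ ≤ (‖a‖₊ : ℝ≥0∞) * ENNReal.ofReal R + (‖b‖₊ : ℝ≥0∞) * ENNReal.ofReal R := by
        gcongr
        exacts [hp, hq]
    _ = ENNReal.ofReal R := by
        rw [← add_mul, ← ENNReal.coe_add, hab', ENNReal.coe_one, one_mul]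

section InnerProductSpace

variable {E F : Type*} [NormedAddCommGroup E] [InnerProductSpace ℝ E]
  [NormedAddCommGroup F] [InnerProductSpace ℝ F]

lemma Convex.real_inner_sub_le_zero_of_forall_norm_sub_le {C : Set E} (hC : Convex ℝ C)
    {z v : E} (hv : v ∈ C) (hnear : ∀ w ∈ C, ‖v - z‖ ≤ ‖w - z‖) :
    ∀ w ∈ C, ⟪z - v, w - v⟫_ℝ ≤ 0 := by
  have : Nonempty C := ⟨⟨v, hv⟩⟩
  refine (norm_eq_iInf_iff_real_inner_le_zero hC hv).mp (le_antisymm ?_ ?_)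
  · exact le_ciInf fun w => by simpa only [norm_sub_rev z] using hnear w w.2
  · exact ciInf_le (f := fun w : C => ‖z - w‖) ⟨0, by rintro _ ⟨w, rfl⟩; positivity⟩ ⟨v, hv⟩

lemma two_mul_real_inner_sub_right_eq (a b c : F) :
    2 * ⟪a, b - c⟫_ℝ = ‖b‖ ^ 2 - ‖c‖ ^ 2 + ‖a - c‖ ^ 2 - ‖a - b‖ ^ 2 := by
  rw [inner_sub_right, norm_sub_sq_real a b, norm_sub_sq_real a c]
  ring

lemma neg_sq_norm_sub_le_two_mul_real_inner_residual (K : E →L[ℝ] F) (y : F) {u v xt : E}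
    (hle : ‖K xt - y‖ ^ 2 ≤ ‖K v - y‖ ^ 2) :
    -‖K (v - u)‖ ^ 2 ≤ 2 * ⟪y - K u, K (xt - v)⟫_ℝ := by
  have hKxt : K (xt - v) = (y - K v) - (y - K xt) := by rw [map_sub]; abel
  have hKvu : (y - K u) - (y - K v) = K (v - u) := by rw [map_sub]; abel
  rw [hKxt, two_mul_real_inner_sub_right_eq, hKvu, norm_sub_rev y, norm_sub_rev y]
  nlinarith [sq_nonneg ‖(y - K u) - (y - K xt)‖]

variable [CompleteSpace E] [CompleteSpace F]

lemma norm_sub_le_of_projectedGradientStep {C : Set E} (hC : Convex ℝ C) (K : E →L[ℝ] F)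
    (y : F) {β r : ℝ} (hβ : 0 ≤ β) (hr : r ≤ 1) {u v xt : E} (hv : v ∈ C)
    (hproj : ∀ w ∈ C, ‖v - (u + β • (ContinuousLinearMap.adjoint K) (y - K u))‖ ≤
      ‖w - (u + β • (ContinuousLinearMap.adjoint K) (y - K u))‖)
    (hB : β * ‖K (v - u)‖ ^ 2 ≤ r * ‖v - u‖ ^ 2) (hxt : xt ∈ C)
    (hmin : ∀ w ∈ C, ‖K xt - y‖ ^ 2 ≤ ‖K w - y‖ ^ 2) :
    ‖v - xt‖ ≤ ‖u - xt‖ := by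
  have hvar : ⟪u - v, xt - v⟫_ℝ + β * ⟪y - K u, K (xt - v)⟫_ℝ ≤ 0 := by
    have h := hC.real_inner_sub_le_zero_of_forall_norm_sub_le hv hproj xt hxt
    rwa [add_sub_right_comm, inner_add_left, real_inner_smul_left,
      ContinuousLinearMap.adjoint_inner_left] at h
  have hres := neg_sq_norm_sub_le_two_mul_real_inner_residual K y (u := u) (hmin v hv)
  have hexpand : ‖u - xt‖ ^ 2 = ‖u - v‖ ^ 2 - 2 * ⟪u - v, xt - v⟫_ℝ + ‖v - xt‖ ^ 2 := by
    rw [← norm_sub_rev xt v, ← norm_sub_sq_real, sub_sub_sub_cancel_right]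
  have hBr : r * ‖v - u‖ ^ 2 ≤ ‖v - u‖ ^ 2 :=
    mul_le_of_le_one_left (sq_nonneg _) hr
  rw [norm_sub_rev v u] at hB hBr
  have hsq : ‖v - xt‖ ^ 2 ≤ ‖u - xt‖ ^ 2 := by nlinarith
  exact (pow_le_pow_iff_left₀ (norm_nonneg _) (norm_nonneg _) two_ne_zero).mp hsq

end InnerProductSpace

theorem stmt18_general {I : Type*} {H : Type*} [NormedAddCommGroup H]
    [InnerProductSpace ℝ H] [CompleteSpace H]
    (K : lp (fun _ : I => ℝ) 2 →L[ℝ] H) (y : H) (R : ℝ)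
    (r : ℝ) (hr1 : r < 1)
    (β : ℕ → ℝ) (hβ1 : ∀ n, 1 ≤ β n)
    (x : ℕ → lp (fun _ : I => ℝ) 2)
    (hiter : ∀ n : ℕ, x (n + 1) ∈ l1Ball I R ∧
      ∀ w ∈ l1Ball I R,
        ‖x (n + 1) - (x n + β n • (ContinuousLinearMap.adjoint K) (y - K (x n)))‖ ≤
          ‖w - (x n + β n • (ContinuousLinearMap.adjoint K) (y - K (x n)))‖)
    (hB2 : ∀ n : ℕ, β n * ‖K (x (n + 1) - x n)‖ ^ 2 ≤ r * ‖x (n + 1) - x n‖ ^ 2)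
    (xt : lp (fun _ : I => ℝ) 2) (hxt : xt ∈ l1Ball I R)
    (hmin : ∀ w ∈ l1Ball I R, ‖K xt - y‖ ^ 2 ≤ ‖K w - y‖ ^ 2) :
    ∀ n : ℕ, ‖x (n + 1) - xt‖ ≤ ‖x n - xt‖ := fun n =>
  norm_sub_le_of_projectedGradientStep (convex_l1Ball I R) K y (zero_le_one.trans (hβ1 n))
    hr1.le (hiter n).1 (hiter n).2 (hB2 n) hxt hmin

/-- If the projected gradient iterates satisfy Condition (B) and `xt` is any minimizer of
`‖Kx - y‖²` over `B_R`, then `‖x (n+1) - xt‖ ≤ ‖x n - xt‖` for every `n` (Fejér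
monotonicity with respect to the set of minimizers). -/
theorem stmt18 {I : Type*} [Countable I] {H : Type*} [NormedAddCommGroup H]
    [InnerProductSpace ℝ H] [CompleteSpace H]
    (K : lp (fun _ : I => ℝ) 2 →L[ℝ] H) (hK : ‖K‖ < 1) (y : H) (R : ℝ) (hR : 0 < R)
    (r : ℝ) (hr : r = ‖(ContinuousLinearMap.adjoint K).comp K‖) (hr1 : r < 1)
    (β : ℕ → ℝ) (βbar : ℝ) (hβ1 : ∀ n, 1 ≤ β n) (hβ2 : ∀ n, β n ≤ βbar)
    (x : ℕ → lp (fun _ : I => ℝ) 2)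
    (hiter : ∀ n : ℕ, x (n + 1) ∈ l1Ball I R ∧
      ∀ w ∈ l1Ball I R,
        ‖x (n + 1) - (x n + β n • (ContinuousLinearMap.adjoint K) (y - K (x n)))‖ ≤
          ‖w - (x n + β n • (ContinuousLinearMap.adjoint K) (y - K (x n)))‖)
    (hB2 : ∀ n : ℕ, β n * ‖K (x (n + 1) - x n)‖ ^ 2 ≤ r * ‖x (n + 1) - x n‖ ^ 2)
    (xt : lp (fun _ : I => ℝ) 2) (hxt : xt ∈ l1Ball I R)
    (hmin : ∀ w ∈ l1Ball I R, ‖K xt - y‖ ^ 2 ≤ ‖K w - y‖ ^ 2) :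
    ∀ n : ℕ, ‖x (n + 1) - xt‖ ≤ ‖x n - xt‖ :=
  stmt18_general K y R r hr1 β hβ1 x hiter hB2 xt hxt hmin
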